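/- Let A be a nonzero finite-dimensional symmetric normalised special Frobenius algebra over ℂ. Then its centre Z(A), equipped with the restriction of the Frobenius functional ε, is a commutative symmetric Frobenius algebra over ℂ; in particular, the bilinear form (z, w) ↦ ε(z*w) is nondegenerate on Z(A). -/
import Mathlib


/-!
STATEMENT 0: Let `A` be a nonzero finite-dimensional symmetric normalised special
Frobenius algebra over ℂ. Then its centre `Z(A)`, equipped with the restriction of the
Frobenius functional `ε`, is a commutative symmetric Frobenius algebra over ℂ;
in particular, the bilinear form `(z, w) ↦ ε (z * w)` is nondegenerate on `Z(A)`.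
-/

open TensorProduct

/-- The contraction `A ⊗ A → A`, `x ⊗ y ↦ ε (b * y) • x`. -/
noncomputable def comulContract {A : Type} [Ring A] [Algebra ℂ A]
    (ε : A →ₗ[ℂ] ℂ) (b : A) : A ⊗[ℂ] A →ₗ[ℂ] A :=
  TensorProduct.lift (((LinearMap.lsmul ℂ A).comp (ε ∘ₗ LinearMap.mulLeft ℂ b)).flip)

/-- `Δ : A → A ⊗ A` is the Frobenius comultiplication associated to the functional `ε`:
for dual bases `(eᵢ)`, `(fᵢ)` with `ε (eᵢ * fⱼ) = δᵢⱼ` one has `Δ a = Σᵢ (a * eᵢ) ⊗ fᵢ`,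
which (given nondegeneracy of `(a, b) ↦ ε (a * b)`) is characterised by the property that
contracting the second tensor factor of `Δ a` against `y ↦ ε (b * y)` yields `a * b`. -/
def IsComul {A : Type} [Ring A] [Algebra ℂ A] (ε : A →ₗ[ℂ] ℂ)
    (Δ : A →ₗ[ℂ] A ⊗[ℂ] A) : Prop :=
  ∀ a b : A, comulContract ε b (Δ a) = a * b

lemma comulContract_tmul {A : Type} [Ring A] [Algebra ℂ A]
    (ε : A →ₗ[ℂ] ℂ) (b x y : A) :
    comulContract ε b (x ⊗ₜ[ℂ] y) = ε (b * y) • x := rfl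

theorem center_of_symmetric_special_frobenius_is_commutative_symmetric_frobenius
    {A : Type} [Ring A] [Algebra ℂ A] [FiniteDimensional ℂ A] [Nontrivial A]
    (ε : A →ₗ[ℂ] ℂ)
    -- the bilinear form `κ (a, b) = ε (a * b)` is nondegenerate
    (hnd : ∀ a : A, (∀ b : A, ε (a * b) = 0) → a = 0)
    -- symmetric
    (hsym : ∀ a b : A, ε (a * b) = ε (b * a))
    -- normalised special: the comultiplication is a right inverse of the multiplication
    (Δ : A →ₗ[ℂ] A ⊗[ℂ] A) (hΔ : IsComul ε Δ)
    (hspecial : (LinearMap.mul' ℂ A) ∘ₗ Δ = LinearMap.id) :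
    -- the centre is commutative
    (∀ z w : Subalgebra.center ℂ A, z * w = w * z) ∧
    -- the restricted functional is symmetric
    (∀ z w : Subalgebra.center ℂ A, ε ((z : A) * (w : A)) = ε ((w : A) * (z : A))) ∧
    -- the restricted bilinear form is nondegenerate, i.e. `(Z(A), ε|_{Z(A)})` is Frobenius
    (∀ z : Subalgebra.center ℂ A,
      (∀ w : Subalgebra.center ℂ A, ε ((z : A) * (w : A)) = 0) → z = 0) := by
  have hnd' : ∀ a : A, (∀ b : A, ε (b * a) = 0) → a = 0 := by
    intro a h
    exact hnd a (fun b => (hsym a b).trans (h b))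
  set D : A →ₗ[ℂ] Module.Dual ℂ A := ((LinearMap.mul ℂ A).compr₂ ε).flip with hD
  have hDinj : Function.Injective D := by
    rw [← LinearMap.ker_eq_bot, LinearMap.ker_eq_bot']
    intro y hy
    refine hnd' y (fun b => ?_)
    have := congrArg (fun f => f b) hy
    simpa [hD] using this
  -- injectivity of the total contraction
  have key : ∀ t : A ⊗[ℂ] A, (∀ b : A, comulContract ε b t = 0) → t = 0 := by
    intro t ht
    set Φ : A ⊗[ℂ] A →ₗ[ℂ] (A →ₗ[ℂ] A) :=
      (dualTensorHom ℂ A A) ∘ₗ (TensorProduct.comm ℂ A (Module.Dual ℂ A)).toLinearMap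
        ∘ₗ (LinearMap.lTensor A D) with hΦ
    have hΦinj : Function.Injective Φ :=
      (dualTensorHomEquiv ℂ A A).injective.comp
        ((TensorProduct.comm ℂ A (Module.Dual ℂ A)).injective.comp
          (Module.Flat.lTensor_preserves_injective_linearMap D hDinj))
    have hΦt : ∀ (s : A ⊗[ℂ] A) (b : A), Φ s b = comulContract ε b s := by
      intro s b
      induction s using TensorProduct.induction_on with
      | zero => simp
      | tmul x y => simp [hΦ, hD, comulContract_tmul]
      | add u v hu hv => simp [map_add, LinearMap.add_apply, hu, hv]
    apply hΦinj
    ext b : 1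
    simp [hΦt, ht b]
  -- Δ a = (a·) ⊗ id applied to Δ 1
  have hΔleft : ∀ a : A, Δ a = LinearMap.rTensor A (LinearMap.mulLeft ℂ a) (Δ 1) := by
    intro a
    have h0 : ∀ b : A,
        comulContract ε b (Δ a - LinearMap.rTensor A (LinearMap.mulLeft ℂ a) (Δ 1)) = 0 := by
      intro b
      have h1 : comulContract ε b (LinearMap.rTensor A (LinearMap.mulLeft ℂ a) (Δ 1))
          = a * comulContract ε b (Δ 1) := by
        have : (comulContract ε b) ∘ₗ (LinearMap.rTensor A (LinearMap.mulLeft ℂ a))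
            = (LinearMap.mulLeft ℂ a) ∘ₗ comulContract ε b := by
          apply TensorProduct.ext'
          intro x y
          simp [comulContract_tmul, LinearMap.rTensor_tmul, mul_smul_comm]
        exact congrArg (fun f => f (Δ 1)) this
      rw [map_sub, h1, hΔ a b, hΔ 1 b, one_mul, sub_self]
    exact sub_eq_zero.mp (key _ h0)
  -- Δ a = id ⊗ (·a) applied to Δ 1
  have hΔright : ∀ a : A, Δ a = LinearMap.lTensor A (LinearMap.mulRight ℂ a) (Δ 1) := by
    intro a
    have h0 : ∀ b : A,
        comulContract ε b (Δ a - LinearMap.lTensor A (LinearMap.mulRight ℂ a) (Δ 1)) = 0 := by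
      intro b
      have h1 : comulContract ε b (LinearMap.lTensor A (LinearMap.mulRight ℂ a) (Δ 1))
          = comulContract ε (a * b) (Δ 1) := by
        have : (comulContract ε b) ∘ₗ (LinearMap.lTensor A (LinearMap.mulRight ℂ a))
            = comulContract ε (a * b) := by
          apply TensorProduct.ext'
          intro x y
          simp only [LinearMap.coe_comp, Function.comp_apply, LinearMap.lTensor_tmul,
            LinearMap.mulRight_apply, comulContract_tmul]
          rw [← mul_assoc, hsym (b * y) a, ← mul_assoc]
        exact congrArg (fun f => f (Δ 1)) this
      rw [map_sub, h1, hΔ a b, hΔ 1 (a * b), one_mul, sub_self]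
    exact sub_eq_zero.mp (key _ h0)
  -- multiplying m(t) on either side
  have hmulL : ∀ (x : A) (t : A ⊗[ℂ] A),
      x * LinearMap.mul' ℂ A t = LinearMap.mul' ℂ A (LinearMap.rTensor A (LinearMap.mulLeft ℂ x) t) := by
    intro x t
    have : (LinearMap.mulLeft ℂ x) ∘ₗ LinearMap.mul' ℂ A
        = (LinearMap.mul' ℂ A) ∘ₗ (LinearMap.rTensor A (LinearMap.mulLeft ℂ x)) := by
      apply TensorProduct.ext'
      intro u v
      simp [mul_assoc]
    exact congrArg (fun f => f t) this
  have hmulR : ∀ (x : A) (t : A ⊗[ℂ] A),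
      LinearMap.mul' ℂ A t * x = LinearMap.mul' ℂ A (LinearMap.lTensor A (LinearMap.mulRight ℂ x) t) := by
    intro x t
    have : (LinearMap.mulRight ℂ x) ∘ₗ LinearMap.mul' ℂ A
        = (LinearMap.mul' ℂ A) ∘ₗ (LinearMap.lTensor A (LinearMap.mulRight ℂ x)) := by
      apply TensorProduct.ext'
      intro u v
      simp [mul_assoc]
    exact congrArg (fun f => f t) this
  have hm1 : LinearMap.mul' ℂ A (Δ 1) = 1 := by
    have := congrArg (fun f => f (1 : A)) hspecial
    simpa using this
  -- the projection to the centre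
  set p : A → A := fun a => LinearMap.mul' ℂ A (LinearMap.lTensor A (LinearMap.mulLeft ℂ a) (Δ 1)) with hp
  have hpcentral : ∀ a : A, p a ∈ Subalgebra.center ℂ A := by
    intro a
    rw [Subalgebra.mem_center_iff]
    intro x
    -- p a * x = m (lTensor (mulRight x ∘ mulLeft a) (Δ 1))
    have h1 : p a * x
        = LinearMap.mul' ℂ A (LinearMap.lTensor A
            ((LinearMap.mulRight ℂ x) ∘ₗ (LinearMap.mulLeft ℂ a)) (Δ 1)) := by
      rw [hp, hmulR x, ← LinearMap.lTensor_comp_apply]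
    have h2 : x * p a
        = LinearMap.mul' ℂ A (LinearMap.lTensor A (LinearMap.mulLeft ℂ a)
            (LinearMap.rTensor A (LinearMap.mulLeft ℂ x) (Δ 1))) := by
      rw [hp, hmulL x]
      congr 1
      rw [← LinearMap.comp_apply, LinearMap.rTensor_comp_lTensor,
        ← LinearMap.lTensor_comp_rTensor, LinearMap.comp_apply]
    rw [h1, h2, ← hΔleft x, hΔright x, ← LinearMap.lTensor_comp_apply]
    congr 2
    ext u
    simp [mul_assoc]
  -- ε (z * p a) = ε (z * a) for central z
  have hεp : ∀ (z : A), z ∈ Subalgebra.center ℂ A → ∀ a : A, ε (z * p a) = ε (z * a) := by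
    intro z hz a
    -- first prove Σ fᵢ eᵢ = 1, i.e. m (comm (Δ 1)) = 1
    have hswap : (TensorProduct.comm ℂ A A) (Δ 1) = Δ 1 := by
      apply sub_eq_zero.mp
      apply key
      intro b
      rw [map_sub, hΔ 1 b, one_mul]
      -- comulContract ε b (comm (Δ 1)) = b
      have hformula : ∀ c : A, ε (c * comulContract ε b ((TensorProduct.comm ℂ A A) (Δ 1)))
          = ε (b * comulContract ε c (Δ 1)) := by
        intro c
        have : (ε ∘ₗ LinearMap.mulLeft ℂ c) ∘ₗ (comulContract ε b) ∘ₗ (TensorProduct.comm ℂ A A).toLinearMap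
            = (ε ∘ₗ LinearMap.mulLeft ℂ b) ∘ₗ comulContract ε c := by
          apply TensorProduct.ext'
          intro x y
          simp [comulContract_tmul, mul_comm (ε (b*x)) (ε (c*y))]
        exact congrArg (fun f => f (Δ 1)) this
      have hb : comulContract ε b ((TensorProduct.comm ℂ A A) (Δ 1)) = b := by
        refine sub_eq_zero.mp (hnd' _ (fun c => ?_))
        rw [mul_sub, map_sub, hformula c, hΔ 1 c, one_mul, hsym b c, sub_self]
      rw [hb, sub_self]
    -- the main computation: ε (z * m (lTensor (mulLeft a) t)) = ε ((a*z) * m (comm t))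
    have hcomp : ∀ t : A ⊗[ℂ] A,
        ε (z * LinearMap.mul' ℂ A (LinearMap.lTensor A (LinearMap.mulLeft ℂ a) t))
        = ε ((a * z) * LinearMap.mul' ℂ A ((TensorProduct.comm ℂ A A) t)) := by
      intro t
      have : (ε ∘ₗ LinearMap.mulLeft ℂ z) ∘ₗ (LinearMap.mul' ℂ A) ∘ₗ (LinearMap.lTensor A (LinearMap.mulLeft ℂ a))
          = (ε ∘ₗ LinearMap.mulLeft ℂ (a * z)) ∘ₗ (LinearMap.mul' ℂ A) ∘ₗ (TensorProduct.comm ℂ A A).toLinearMap := by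
        apply TensorProduct.ext'
        intro x y
        simp only [LinearMap.coe_comp, Function.comp_apply, LinearMap.lTensor_tmul,
          LinearMap.mulLeft_apply, LinearEquiv.coe_coe, TensorProduct.comm_tmul,
          LinearMap.mul'_apply]
        have hz' : ∀ g : A, g * z = z * g := Subalgebra.mem_center_iff.mp hz
        calc ε (z * (x * (a * y))) = ε ((z * x) * (a * y)) := by rw [mul_assoc]
          _ = ε ((a * y) * (z * x)) := hsym _ _
          _ = ε (a * z * (y * x)) := by
              rw [mul_assoc a y (z * x), ← mul_assoc y z x, hz' y, mul_assoc z y x,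
                ← mul_assoc a z (y * x)]
      exact congrArg (fun f => f t) this
    have := hcomp (Δ 1)
    rw [hswap, hm1, mul_one] at this
    have hza : (a : A) * z = z * a := Subalgebra.mem_center_iff.mp hz a
    calc ε (z * p a) = ε (a * z) := this
      _ = ε (z * a) := by rw [hza]
  -- conclusion
  refine ⟨?_, ?_, ?_⟩
  · intro z w
    ext
    exact Subalgebra.mem_center_iff.mp w.2 z
  · intro z w
    exact hsym _ _
  · intro z hzw
    have hz := z.2
    apply Subtype.ext
    apply hnd
    intro b
    have : ε ((z : A) * p b) = 0 := hzw ⟨p b, hpcentral b⟩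
    rw [← hεp (z : A) hz b, this]
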